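/- arXiv:2206.14102 — 2 statements merged into one kernel-verified Lean document; each statement's English description precedes it below -/
import Mathlib

section
/- Let K = ∏_{k=1}^N [a_k, b_k] be a compact N-dimensional interval in ℝ^N and let 𝓡(K) be the vector lattice of all Riemann integrable functions on K, i.e. all bounded functions f : K → ℝ whose set of points of discontinuity has Lebesgue measure zero. Let (T_n) be a sequence of weakly nonlinear (sublinear and translatable) and monotone operators from 𝓡(K) into itself such that T_n(h)(x) → h(x) for Lebesgue-almost every x ∈ K for each of the test functions h ∈ {1, pr_1, …, pr_N, −pr_1, …, −pr_N, Σ_{k=1}^N pr_k²} (restricted to K). Then T_n(f)(x) → f(x) for Lebesgue-almost every x ∈ K, for every f ∈ 𝓡(K). -/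
/-!
Fix a point `x` at which `f` is continuous and put `φ_x y = ∑ k, (y k - x k) ^ 2`. Expanding
the square writes `φ_x` as `∑ k, pr_k ^ 2 - 2 ∑ k, x k • pr_k + |x|² • 1`, so sublinearity and
translatability bound `0 ≤ T n φ_x x` by the same combination of the values of `T n` on the test
functions, and hence `T n φ_x x → 0`; for `x k < 0` the term `-2 x k • pr_k` is a nonnegative
multiple of `-pr_k`, which is why the `-pr_k` are test functions. Continuity at `x` and
boundedness give `|f - f x| ≤ ε + C φ_x`, and monotonicity then squeezes `T n f x` between
`(f x - ε) T n 1 x - C T n φ_x x` and `(f x + ε) T n 1 x + C T n φ_x x`. A Riemann integrable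
`f` is continuous almost everywhere, and countably many a.e. limits hold simultaneously a.e.
-/

open MeasureTheory Filter Topology Set

section BoundedAEContinuous

variable {X : Type*} [TopologicalSpace X] [MeasurableSpace X]

def boundedAEContinuous (μ : Measure X) : Submodule ℝ (X → ℝ) where
  carrier := {f | (∃ M : ℝ, ∀ x, |f x| ≤ M) ∧ μ {x | ¬ ContinuousAt f x} = 0}
  add_mem' := by
    rintro f g ⟨⟨M, hM⟩, hf⟩ ⟨⟨M', hM'⟩, hg⟩
    refine ⟨⟨M + M', fun x => (abs_add_le _ _).trans (add_le_add (hM x) (hM' x))⟩, ?_⟩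
    refine measure_mono_null (fun x hx => ?_) (measure_union_null hf hg)
    by_contra h
    simp only [mem_union, mem_ofPred_eq, not_or, not_not] at h
    exact hx (h.1.add h.2)
  zero_mem' := ⟨⟨0, fun x => by simp⟩, by simp [continuous_zero.continuousAt]⟩
  smul_mem' := by
    rintro c f ⟨⟨M, hM⟩, hf⟩
    refine ⟨⟨|c| * M, fun x => ?_⟩, measure_mono_null (fun x hx => ?_) hf⟩
    · simpa [abs_mul] using mul_le_mul_of_nonneg_left (hM x) (abs_nonneg c)
    · exact fun h => hx (h.const_smul c)

variable {μ : Measure X}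

theorem mem_boundedAEContinuous_of_continuous [CompactSpace X] {g : X → ℝ}
    (hg : Continuous g) : g ∈ boundedAEContinuous μ := by
  obtain ⟨M, hM⟩ := isCompact_univ.exists_bound_of_continuousOn hg.continuousOn
  exact ⟨⟨M, fun x => hM x (mem_univ x)⟩, by simp [hg.continuousAt]⟩

theorem ae_continuousAt_of_mem_boundedAEContinuous {f : X → ℝ}
    (hf : f ∈ boundedAEContinuous μ) : ∀ᵐ x ∂μ, ContinuousAt f x :=
  ae_iff.2 hf.2

end BoundedAEContinuous

structure IsWeaklyNonlinearMonotone {X : Type*} (E : Submodule ℝ (X → ℝ))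
    (T : (X → ℝ) → X → ℝ) : Prop where
  map_add_le : ∀ f ∈ E, ∀ g ∈ E, T (f + g) ≤ T f + T g
  map_smul_of_nonneg : ∀ α : ℝ, 0 ≤ α → ∀ f ∈ E, T (α • f) = α • T f
  monotoneOn : MonotoneOn T E
  map_add_smul_one_of_nonneg : ∀ f ∈ E, ∀ α : ℝ, 0 ≤ α → T (f + α • 1) = T f + α • T 1

namespace IsWeaklyNonlinearMonotone

variable {X : Type*} {E : Submodule ℝ (X → ℝ)} {T : (X → ℝ) → X → ℝ}
  (hT : IsWeaklyNonlinearMonotone E T)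
include hT

theorem map_zero : T 0 = 0 := by
  simpa using hT.map_smul_of_nonneg 0 le_rfl 0 E.zero_mem

theorem map_nonneg {f : X → ℝ} (hf : f ∈ E) (h0 : 0 ≤ f) : 0 ≤ T f :=
  hT.map_zero ▸ hT.monotoneOn E.zero_mem hf h0

theorem neg_map_neg_le {f : X → ℝ} (hf : f ∈ E) : -T (-f) ≤ T f := by
  have h := hT.map_add_le f hf (-f) (E.neg_mem hf)
  rw [add_neg_cancel, hT.map_zero] at h
  exact neg_le_iff_add_nonneg.2 h

theorem map_add_smul_one (h1 : (1 : X → ℝ) ∈ E) {f : X → ℝ} (hf : f ∈ E) (α : ℝ) :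
    T (f + α • 1) = T f + α • T 1 := by
  rcases le_or_gt 0 α with hα | hα
  · exact hT.map_add_smul_one_of_nonneg f hf α hα
  · have h := hT.map_add_smul_one_of_nonneg (f + α • 1) (E.add_mem hf (E.smul_mem α h1))
      (-α) (by linarith)
    rw [add_assoc, ← add_smul, add_neg_cancel, zero_smul, add_zero] at h
    rw [h, add_assoc, ← add_smul, neg_add_cancel, zero_smul, add_zero]

theorem map_sum_le {ι : Type*} (s : Finset ι) {g : ι → X → ℝ} (hg : ∀ i ∈ s, g i ∈ E) :
    T (∑ i ∈ s, g i) ≤ ∑ i ∈ s, T (g i) := by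
  classical
  induction s using Finset.induction_on with
  | empty => simp [hT.map_zero]
  | insert i s hi ih =>
    rw [Finset.sum_insert hi, Finset.sum_insert hi]
    have hgs : ∀ j ∈ s, g j ∈ E := fun j hj => hg j (Finset.mem_insert_of_mem hj)
    calc T (g i + ∑ j ∈ s, g j) ≤ T (g i) + T (∑ j ∈ s, g j) :=
          hT.map_add_le _ (hg i (Finset.mem_insert_self i s)) _ (E.sum_mem hgs)
      _ ≤ T (g i) + ∑ j ∈ s, T (g j) := add_le_add le_rfl (ih hgs)

theorem map_le_smul_add_smul_one (h1 : (1 : X → ℝ) ∈ E) {f φ : X → ℝ} (hf : f ∈ E)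
    (hφ : φ ∈ E) {C : ℝ} (hC : 0 ≤ C) {c : ℝ} (hfφ : f ≤ C • φ + c • 1) :
    T f ≤ C • T φ + c • T 1 := by
  have hCφ : C • φ ∈ E := E.smul_mem C hφ
  calc T f ≤ T (C • φ + c • 1) :=
        hT.monotoneOn hf (E.add_mem hCφ (E.smul_mem c h1)) hfφ
    _ = C • T φ + c • T 1 := by
        rw [hT.map_add_smul_one h1 hCφ, hT.map_smul_of_nonneg C hC φ hφ]

theorem smul_one_sub_smul_le_map (h1 : (1 : X → ℝ) ∈ E) {f φ : X → ℝ} (hf : f ∈ E)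
    (hφ : φ ∈ E) {C : ℝ} (hC : 0 ≤ C) {c : ℝ} (hfφ : c • 1 - C • φ ≤ f) :
    c • T 1 - C • T φ ≤ T f := by
  have hCφ : -(C • φ) ∈ E := E.neg_mem (E.smul_mem C hφ)
  calc c • T 1 - C • T φ = -T (C • φ) + c • T 1 := by
        rw [hT.map_smul_of_nonneg C hC φ hφ]; abel
    _ ≤ T (-(C • φ)) + c • T 1 := by
        gcongr
        exact neg_le.1 (hT.neg_map_neg_le (E.smul_mem C hφ))
    _ = T (c • 1 - C • φ) := by
        rw [← hT.map_add_smul_one h1 hCφ, sub_eq_neg_add]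
    _ ≤ T f := hT.monotoneOn (E.sub_mem (E.smul_mem c h1) (E.smul_mem C hφ)) hf hfφ

end IsWeaklyNonlinearMonotone

theorem dist_sq_le_sum_sq_sub {ι : Type*} [Fintype ι] (y x : ι → ℝ) :
    dist y x ^ 2 ≤ ∑ k, (y k - x k) ^ 2 := by
  have hsum : 0 ≤ ∑ k, (y k - x k) ^ 2 := Finset.sum_nonneg fun k _ => sq_nonneg _
  have hdist : dist y x ≤ √(∑ k, (y k - x k) ^ 2) := by
    refine (dist_pi_le_iff (Real.sqrt_nonneg _)).2 fun k => ?_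
    rw [Real.dist_eq, ← Real.sqrt_sq_eq_abs]
    exact Real.sqrt_le_sqrt (Finset.single_le_sum (f := fun j => (y j - x j) ^ 2)
      (fun j _ => sq_nonneg _) (Finset.mem_univ k))
  calc dist y x ^ 2 ≤ √(∑ k, (y k - x k) ^ 2) ^ 2 := by gcongr
    _ = ∑ k, (y k - x k) ^ 2 := Real.sq_sqrt hsum

theorem exists_abs_sub_le_add_mul_of_continuousAt {X : Type*} [PseudoMetricSpace X]
    {f φ : X → ℝ} {x : X} {M : ℝ} (hM : ∀ y, |f y| ≤ M) (hf : ContinuousAt f x)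
    (hφ : ∀ y, dist y x ^ 2 ≤ φ y) {ε : ℝ} (hε : 0 < ε) :
    ∃ C, 0 ≤ C ∧ ∀ y, |f y - f x| ≤ ε + C * φ y := by
  obtain ⟨δ, hδ, hfδ⟩ := Metric.continuousAt_iff.1 hf ε hε
  have hM0 : 0 ≤ M := (abs_nonneg _).trans (hM x)
  refine ⟨2 * M / δ ^ 2, by positivity, fun y => ?_⟩
  have hCφ : 0 ≤ 2 * M / δ ^ 2 * φ y := by
    have := (sq_nonneg (dist y x)).trans (hφ y)
    positivity
  rcases lt_or_ge (dist y x) δ with hy | hy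
  · have := hfδ hy
    rw [Real.dist_eq] at this
    linarith
  · have hδφ : δ ^ 2 ≤ φ y := (pow_le_pow_left₀ hδ.le hy 2).trans (hφ y)
    calc |f y - f x| ≤ |f y| + |f x| := abs_sub _ _
      _ ≤ 2 * M := by linarith [hM y, hM x]
      _ = 2 * M / δ ^ 2 * δ ^ 2 := by field_simp
      _ ≤ 2 * M / δ ^ 2 * φ y := by gcongr
      _ ≤ ε + 2 * M / δ ^ 2 * φ y := by linarith

section Sequence

variable {X : Type*} {E : Submodule ℝ (X → ℝ)} {T : ℕ → (X → ℝ) → X → ℝ}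
  (hT : ∀ n, IsWeaklyNonlinearMonotone E (T n))
include hT

theorem tendsto_apply_smul_of_tendsto_apply_neg {g : X → ℝ} (hg : g ∈ E) {x : X} {u : ℝ}
    (hTg : Tendsto (fun n => T n g x) atTop (𝓝 u))
    (hTneg : Tendsto (fun n => T n (fun y => -g y) x) atTop (𝓝 (-u))) (α : ℝ) :
    Tendsto (fun n => T n (α • g) x) atTop (𝓝 (α * u)) := by
  rcases le_or_gt 0 α with hα | hα
  · simp_rw [(hT _).map_smul_of_nonneg α hα g hg]
    exact hTg.const_mul α
  · have hsmul : α • g = (-α) • fun y => -g y := by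
      ext y; simp
    have hneg : (fun y => -g y) ∈ E := E.neg_mem hg
    simp_rw [hsmul, (hT _).map_smul_of_nonneg (-α) (by linarith) _ hneg]
    simpa using hTneg.const_mul (-α)

theorem tendsto_apply_sum_sq_sub (h1 : (1 : X → ℝ) ∈ E) {ι : Type*} [Fintype ι]
    {p : ι → X → ℝ} (hp : ∀ k, p k ∈ E) (hq : (fun y => ∑ k, p k y ^ 2) ∈ E) {x : X}
    (hT1 : Tendsto (fun n => T n 1 x) atTop (𝓝 1))
    (hTp : ∀ k, Tendsto (fun n => T n (p k) x) atTop (𝓝 (p k x)))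
    (hTneg : ∀ k, Tendsto (fun n => T n (fun y => -p k y) x) atTop (𝓝 (-p k x)))
    (hTq : Tendsto (fun n => T n (fun y => ∑ k, p k y ^ 2) x) atTop (𝓝 (∑ k, p k x ^ 2))) :
    Tendsto (fun n => T n (fun y => ∑ k, (p k y - p k x) ^ 2) x) atTop (𝓝 0) := by
  set q : X → ℝ := fun y => ∑ k, p k y ^ 2
  set c := ∑ k, p k x ^ 2
  have hlin : ∀ k, (-2 * p k x) • p k ∈ E := fun k => E.smul_mem _ (hp k)
  have hexpand : (fun y => ∑ k, (p k y - p k x) ^ 2) = q + ∑ k, (-2 * p k x) • p k + c • 1 := by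
    ext y
    simp only [q, c, Pi.add_apply, Finset.sum_apply, Pi.smul_apply, smul_eq_mul,
      Pi.one_apply, mul_one, ← Finset.sum_add_distrib]
    exact Finset.sum_congr rfl fun k _ => by ring
  have hupper : ∀ n, T n (fun y => ∑ k, (p k y - p k x) ^ 2) x ≤
      T n q x + ∑ k, T n ((-2 * p k x) • p k) x + c * T n 1 x := fun n => by
    have h : T n (q + ∑ k, (-2 * p k x) • p k + c • 1) ≤
        T n q + ∑ k, T n ((-2 * p k x) • p k) + c • T n 1 := by
      rw [(hT n).map_add_smul_one h1 (E.add_mem hq (E.sum_mem fun k _ => hlin k)) c]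
      gcongr
      exact ((hT n).map_add_le _ hq _ (E.sum_mem fun k _ => hlin k)).trans
        (add_le_add le_rfl ((hT n).map_sum_le _ fun k _ => hlin k))
    rw [hexpand]
    simpa using h x
  have hnonneg : ∀ n, 0 ≤ T n (fun y => ∑ k, (p k y - p k x) ^ 2) x := fun n => by
    have hφ : (fun y => ∑ k, (p k y - p k x) ^ 2) ∈ E := by
      rw [hexpand]
      exact E.add_mem (E.add_mem hq (E.sum_mem fun k _ => hlin k)) (E.smul_mem c h1)
    exact (hT n).map_nonneg hφ (fun y => Finset.sum_nonneg fun k _ => sq_nonneg _) x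
  have hlim : Tendsto (fun n => T n q x + ∑ k, T n ((-2 * p k x) • p k) x + c * T n 1 x)
      atTop (𝓝 (c + ∑ k, -2 * p k x * p k x + c * 1)) :=
    (hTq.add (tendsto_finsetSum _ fun k _ =>
      tendsto_apply_smul_of_tendsto_apply_neg hT (hp k) (hTp k) (hTneg k) _)).add
      (hT1.const_mul c)
  have hzero : c + ∑ k, -2 * p k x * p k x + c * 1 = 0 := by
    simp only [c, mul_assoc, ← Finset.mul_sum, ← sq]
    ring
  rw [hzero] at hlim
  exact tendsto_of_tendsto_of_tendsto_of_le_of_le tendsto_const_nhds hlim hnonneg hupper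

theorem tendsto_apply_of_continuousAt [PseudoMetricSpace X] (h1 : (1 : X → ℝ) ∈ E)
    {f φ : X → ℝ} (hf : f ∈ E) (hφE : φ ∈ E) {M : ℝ} (hM : ∀ y, |f y| ≤ M) {x : X}
    (hfx : ContinuousAt f x) (hφ : ∀ y, dist y x ^ 2 ≤ φ y)
    (hT1 : Tendsto (fun n => T n 1 x) atTop (𝓝 1))
    (hTφ : Tendsto (fun n => T n φ x) atTop (𝓝 0)) :
    Tendsto (fun n => T n f x) atTop (𝓝 (f x)) := by
  refine tendsto_order.2 ⟨fun a ha => ?_, fun a ha => ?_⟩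
  · obtain ⟨C, hC, hfC⟩ := exists_abs_sub_le_add_mul_of_continuousAt hM hfx hφ
      (ε := (f x - a) / 2) (by linarith)
    have hlow : ∀ n, (f x - (f x - a) / 2) * T n 1 x - C * T n φ x ≤ T n f x := fun n => by
      refine (hT n).smul_one_sub_smul_le_map h1 hf hφE hC (fun y => ?_) x
      simp only [Pi.sub_apply, Pi.smul_apply, Pi.one_apply, smul_eq_mul, mul_one]
      linarith [abs_le.1 (hfC y)]
    have hlim := (hT1.const_mul (f x - (f x - a) / 2)).sub (hTφ.const_mul C)
    filter_upwards [hlim.eventually_const_lt (u := a) (by linarith)] with n hn using hn.trans_le (hlow n)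
  · obtain ⟨C, hC, hfC⟩ := exists_abs_sub_le_add_mul_of_continuousAt hM hfx hφ
      (ε := (a - f x) / 2) (by linarith)
    have hup : ∀ n, T n f x ≤ C * T n φ x + (f x + (a - f x) / 2) * T n 1 x := fun n => by
      refine (hT n).map_le_smul_add_smul_one h1 hf hφE hC (fun y => ?_) x
      simp only [Pi.add_apply, Pi.smul_apply, Pi.one_apply, smul_eq_mul, mul_one]
      linarith [abs_le.1 (hfC y)]
    have hlim := (hTφ.const_mul C).add (hT1.const_mul (f x + (a - f x) / 2))
    filter_upwards [hlim.eventually_lt_const (u := a) (by linarith)] with n hn using (hup n).trans_lt hn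

end Sequence

theorem korovkin_ae_riemannIntegrable_general {N : ℕ} (a b : Fin N → ℝ)
    (K : Set (Fin N → ℝ)) (hK : K = Icc a b)
    (μ : Measure K)
    -- `𝓡(K)`: bounded functions whose set of discontinuity points is Lebesgue-null
    (R : Set (K → ℝ))
    (hR : R = {f : K → ℝ | (∃ M : ℝ, ∀ x, |f x| ≤ M) ∧ μ {x | ¬ ContinuousAt f x} = 0})
    -- `(T n)` is a sequence of weakly nonlinear and monotone operators on `𝓡(K)`
    (T : ℕ → (K → ℝ) → (K → ℝ))
    (hsubadd : ∀ n, ∀ f ∈ R, ∀ g ∈ R, T n (f + g) ≤ T n f + T n g)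
    (hhom : ∀ n, ∀ (α : ℝ), 0 ≤ α → ∀ f ∈ R, T n (α • f) = α • T n f)
    (hmono : ∀ n, ∀ f ∈ R, ∀ g ∈ R, f ≤ g → T n f ≤ T n g)
    (htrans : ∀ n, ∀ f ∈ R, ∀ (α : ℝ), 0 ≤ α →
      T n (f + α • (fun _ : K => (1 : ℝ))) = T n f + α • T n (fun _ : K => (1 : ℝ)))
    -- a.e. convergence on the test functions
    (htest1 : ∀ᵐ x ∂μ, Tendsto (fun n => T n (fun _ => 1) x) atTop (𝓝 1))
    (htestpr : ∀ k : Fin N, ∀ᵐ x ∂μ,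
      Tendsto (fun n => T n (fun y : K => (y : Fin N → ℝ) k) x) atTop
        (𝓝 ((x : Fin N → ℝ) k)))
    (htestprneg : ∀ k : Fin N, ∀ᵐ x ∂μ,
      Tendsto (fun n => T n (fun y : K => -((y : Fin N → ℝ) k)) x) atTop
        (𝓝 (-((x : Fin N → ℝ) k))))
    (htestsq : ∀ᵐ x ∂μ,
      Tendsto (fun n => T n (fun y : K => ∑ k, ((y : Fin N → ℝ) k) ^ 2) x) atTop
        (𝓝 (∑ k, ((x : Fin N → ℝ) k) ^ 2))) :
    ∀ f ∈ R, ∀ᵐ x ∂μ, Tendsto (fun n => T n f x) atTop (𝓝 (f x)) := by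
  have : CompactSpace K := isCompact_iff_compactSpace.1 (hK ▸ isCompact_Icc)
  obtain rfl : R = boundedAEContinuous μ := hR
  have hT n : IsWeaklyNonlinearMonotone (boundedAEContinuous μ) (T n) :=
    ⟨hsubadd n, hhom n, hmono n, htrans n⟩
  have hcoord (k : Fin N) : Continuous fun y : K => (y : Fin N → ℝ) k :=
    (continuous_apply k).comp continuous_subtype_val
  have hmem {g : K → ℝ} (hg : Continuous g) := mem_boundedAEContinuous_of_continuous (μ := μ) hg
  intro f hf
  filter_upwards [htest1, ae_all_iff.2 htestpr, ae_all_iff.2 htestprneg, htestsq,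
    ae_continuousAt_of_mem_boundedAEContinuous hf] with x hT1 hTp hTneg hTq hfx
  obtain ⟨M, hM⟩ := hf.1
  have h1 : (1 : K → ℝ) ∈ boundedAEContinuous μ := hmem continuous_const
  refine tendsto_apply_of_continuousAt hT h1 hf
    (hmem (continuous_finsetSum _ fun k _ => ((hcoord k).sub continuous_const).pow 2)) hM hfx
    (fun y => dist_sq_le_sum_sq_sub (y : Fin N → ℝ) x) hT1 ?_
  exact tendsto_apply_sum_sq_sub hT h1 (fun k => hmem (hcoord k))
    (hmem (continuous_finsetSum _ fun k _ => (hcoord k).pow 2))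
    hT1 hTp hTneg hTq

/-- **Corollary `cor1`.** Korovkin-type theorem for a.e. convergence on
the vector lattice `𝓡(K)` of Riemann integrable functions (bounded functions whose
set of discontinuity points is Lebesgue-null) on a compact `N`-dimensional interval
`K = ∏ [a_k, b_k]`, for weakly nonlinear and monotone operators from `𝓡(K)` into
itself. -/
theorem korovkin_ae_riemannIntegrable {N : ℕ} (a b : Fin N → ℝ) (hab : ∀ k, a k ≤ b k)
    (K : Set (Fin N → ℝ)) (hK : K = Icc a b)
    (μ : Measure K)
    (hμ : μ = Measure.comap Subtype.val (volume : Measure (Fin N → ℝ)))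
    -- `𝓡(K)`: bounded functions whose set of discontinuity points is Lebesgue-null
    (R : Set (K → ℝ))
    (hR : R = {f : K → ℝ | (∃ M : ℝ, ∀ x, |f x| ≤ M) ∧ μ {x | ¬ ContinuousAt f x} = 0})
    -- `(T n)` is a sequence of weakly nonlinear and monotone operators on `𝓡(K)`
    (T : ℕ → (K → ℝ) → (K → ℝ))
    (hmap : ∀ n, ∀ f ∈ R, T n f ∈ R)
    (hsubadd : ∀ n, ∀ f ∈ R, ∀ g ∈ R, T n (f + g) ≤ T n f + T n g)
    (hhom : ∀ n, ∀ (α : ℝ), 0 ≤ α → ∀ f ∈ R, T n (α • f) = α • T n f)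
    (hmono : ∀ n, ∀ f ∈ R, ∀ g ∈ R, f ≤ g → T n f ≤ T n g)
    (htrans : ∀ n, ∀ f ∈ R, ∀ (α : ℝ), 0 ≤ α →
      T n (f + α • (fun _ : K => (1 : ℝ))) = T n f + α • T n (fun _ : K => (1 : ℝ)))
    -- a.e. convergence on the test functions
    (htest1 : ∀ᵐ x ∂μ, Tendsto (fun n => T n (fun _ => 1) x) atTop (𝓝 1))
    (htestpr : ∀ k : Fin N, ∀ᵐ x ∂μ,
      Tendsto (fun n => T n (fun y : K => (y : Fin N → ℝ) k) x) atTop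
        (𝓝 ((x : Fin N → ℝ) k)))
    (htestprneg : ∀ k : Fin N, ∀ᵐ x ∂μ,
      Tendsto (fun n => T n (fun y : K => -((y : Fin N → ℝ) k)) x) atTop
        (𝓝 (-((x : Fin N → ℝ) k))))
    (htestsq : ∀ᵐ x ∂μ,
      Tendsto (fun n => T n (fun y : K => ∑ k, ((y : Fin N → ℝ) k) ^ 2) x) atTop
        (𝓝 (∑ k, ((x : Fin N → ℝ) k) ^ 2))) :
    ∀ f ∈ R, ∀ᵐ x ∂μ, Tendsto (fun n => T n f x) atTop (𝓝 (f x)) :=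
  korovkin_ae_riemannIntegrable_general a b K hK μ R hR T hsubadd hhom hmono htrans htest1 htestpr
    htestprneg htestsq
end

section
/- Let X be a subset of ℝ^N, let ω be a point of X, and let E be a vector sublattice of the real-valued functions on X containing the restrictions to X of the test functions 1, pr_1, …, pr_N, −pr_1, …, −pr_N and Σ_{k=1}^N pr_k². Let (T_n) be a sequence of weakly nonlinear (sublinear and translatable) and monotone operators from E into the real-valued functions on X such that T_n(h)(x) → h(ω) as n → ∞, for every x ∈ X and each of the test functions h. Then T_n(f)(x) → f(ω) as n → ∞, for every x ∈ X and every bounded f ∈ E that is continuous at ω. -/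
open MeasureTheory Filter Topology Set

/-!
Korovkin's argument at the point `ω`. Put `φ y = ∑ k (y_k - ω_k)²`. Expanding the square writes `φ`
as `∑ pr_k² + ∑ (-2ω_k) pr_k + |ω|²·1`, so sublinearity and translatability bound `T_n φ x` by a
combination of the values on test functions whose limit is `0`; monotonicity gives `T_n φ x ≥ 0`,
hence `T_n φ x → 0`. A bounded `f` continuous at `ω` satisfies `|f - f(ω)| ≤ ε + K φ` for every
`ε > 0` and a suitable `K`; applying `T_n` to this two-sided bound and letting `n → ∞` gives the claim.
-/

structure IsMonotoneWeaklyNonlinear {α : Type*} (E : Submodule ℝ (α → ℝ))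
    (T : (α → ℝ) → α → ℝ) : Prop where
  add_le : ∀ f ∈ E, ∀ g ∈ E, T (f + g) ≤ T f + T g
  smul_of_nonneg : ∀ c : ℝ, 0 ≤ c → ∀ f ∈ E, T (c • f) = c • T f
  mono : ∀ f ∈ E, ∀ g ∈ E, f ≤ g → T f ≤ T g
  add_const : ∀ f ∈ E, ∀ c : ℝ, 0 ≤ c →
    T (f + c • fun _ : α => (1 : ℝ)) = T f + c • T fun _ : α => (1 : ℝ)

namespace IsMonotoneWeaklyNonlinear

variable {α : Type*} {E : Submodule ℝ (α → ℝ)} {T : (α → ℝ) → α → ℝ}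

theorem map_zero (hT : IsMonotoneWeaklyNonlinear E T) : T 0 = 0 := by
  simpa using hT.smul_of_nonneg 0 le_rfl 0 E.zero_mem

theorem map_add_const (hT : IsMonotoneWeaklyNonlinear E T) (h1 : (fun _ : α => (1 : ℝ)) ∈ E)
    {f : α → ℝ} (hf : f ∈ E) (c : ℝ) :
    T (f + c • fun _ : α => (1 : ℝ)) = T f + c • T fun _ : α => (1 : ℝ) := by
  rcases le_or_gt 0 c with hc | hc
  · exact hT.add_const f hf c hc
  · have h := hT.add_const _ (E.add_mem hf (E.smul_mem c h1)) (-c) (by linarith)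
    rw [add_assoc, ← add_smul, add_neg_cancel, zero_smul, add_zero] at h
    rw [h, neg_smul, neg_add_cancel_right]

theorem nonneg_of_nonneg (hT : IsMonotoneWeaklyNonlinear E T) {f : α → ℝ} (hf : f ∈ E)
    (h0 : 0 ≤ f) : 0 ≤ T f := by
  simpa [hT.map_zero] using hT.mono 0 E.zero_mem f hf h0

theorem nonneg_add_map_neg (hT : IsMonotoneWeaklyNonlinear E T) {f : α → ℝ} (hf : f ∈ E) :
    0 ≤ T f + T (-f) := by
  simpa [hT.map_zero] using hT.add_le f hf (-f) (E.neg_mem hf)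

theorem map_sum_le (hT : IsMonotoneWeaklyNonlinear E T) {ι : Type*} (s : Finset ι)
    {g : ι → α → ℝ} (hg : ∀ i, g i ∈ E) : T (∑ i ∈ s, g i) ≤ ∑ i ∈ s, T (g i) := by
  classical
  induction s using Finset.induction_on with
  | empty => simp [hT.map_zero]
  | insert i s hi ih =>
    rw [Finset.sum_insert hi, Finset.sum_insert hi]
    exact (hT.add_le _ (hg i) _ (E.sum_mem fun j _ => hg j)).trans (add_le_add_right ih _)

theorem map_le_smul_add_const (hT : IsMonotoneWeaklyNonlinear E T)
    (h1 : (fun _ : α => (1 : ℝ)) ∈ E) {g φ : α → ℝ} (hg : g ∈ E) (hφ : φ ∈ E) {K : ℝ}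
    (hK : 0 ≤ K) {c : ℝ} (hle : g ≤ K • φ + c • fun _ => 1) :
    T g ≤ K • T φ + c • T fun _ => 1 := by
  calc T g ≤ T (K • φ + c • fun _ => 1) :=
        hT.mono g hg _ (E.add_mem (E.smul_mem K hφ) (E.smul_mem c h1)) hle
    _ = K • T φ + c • T fun _ => 1 := by
        rw [hT.map_add_const h1 (E.smul_mem K hφ), hT.smul_of_nonneg K hK φ hφ]

/-- The two sides come from applying `T` to `f` and to `-f`; `T f ≥ -T (-f)` links them. -/
theorem abs_map_sub_le (hT : IsMonotoneWeaklyNonlinear E T) (h1 : (fun _ : α => (1 : ℝ)) ∈ E)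
    {f φ : α → ℝ} (hf : f ∈ E) (hφ : φ ∈ E) {a ε K : ℝ} (hK : 0 ≤ K)
    (hfφ : ∀ y, |f y - a| ≤ ε + K * φ y) (x : α) :
    |T f x - a * T (fun _ => 1) x| ≤ ε * T (fun _ => 1) x + K * T φ x := by
  have upper := hT.map_le_smul_add_const h1 hf hφ hK (c := a + ε) fun y => by
    have := (abs_le.1 (hfφ y)).2
    simp only [Pi.add_apply, Pi.smul_apply, smul_eq_mul, mul_one]
    linarith
  have lower := hT.map_le_smul_add_const h1 (E.neg_mem hf) hφ hK (c := ε - a) fun y => by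
    have := (abs_le.1 (hfφ y)).1
    simp only [Pi.neg_apply, Pi.add_apply, Pi.smul_apply, smul_eq_mul, mul_one]
    linarith
  have hsum := hT.nonneg_add_map_neg hf x
  replace upper := upper x
  replace lower := lower x
  simp only [Pi.add_apply, Pi.smul_apply, Pi.zero_apply, smul_eq_mul] at upper lower hsum
  rw [abs_le]
  constructor <;> linarith

end IsMonotoneWeaklyNonlinear

section Sequence

variable {α : Type*} {E : Submodule ℝ (α → ℝ)} {T : ℕ → (α → ℝ) → α → ℝ}

theorem tendsto_map_smul_apply (hT : ∀ n, IsMonotoneWeaklyNonlinear E (T n)) {g : α → ℝ}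
    (hg : g ∈ E) {a : ℝ} {x : α} (hpos : Tendsto (fun n => T n g x) atTop (𝓝 a))
    (hneg : Tendsto (fun n => T n (-g) x) atTop (𝓝 (-a))) (c : ℝ) :
    Tendsto (fun n => T n (c • g) x) atTop (𝓝 (c * a)) := by
  rcases le_or_gt 0 c with hc | hc
  · simp_rw [(hT _).smul_of_nonneg c hc g hg]
    exact hpos.const_mul c
  · have hcg : c • g = (-c) • -g := by rw [smul_neg, neg_smul, neg_neg]
    simp_rw [hcg, (hT _).smul_of_nonneg (-c) (by linarith) (-g) (E.neg_mem hg)]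
    simpa using hneg.const_mul (-c)

variable {ι : Type*} [Fintype ι]

theorem sum_sq_sub_eq (p : ι → α → ℝ) (c : ι → ℝ) :
    (fun y => ∑ k, (p k y - c k) ^ 2) =
      (fun y => ∑ k, p k y ^ 2) + ∑ k, (-2 * c k) • p k + (∑ k, c k ^ 2) • fun _ => 1 := by
  ext y
  simp only [Pi.add_apply, Finset.sum_apply, Pi.smul_apply, smul_eq_mul, mul_one,
    ← Finset.sum_add_distrib]
  exact Finset.sum_congr rfl fun k _ => by ring

variable {p : ι → α → ℝ} {c : ι → ℝ}

theorem sum_sq_sub_mem (h1 : (fun _ : α => (1 : ℝ)) ∈ E) (hp : ∀ k, p k ∈ E)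
    (hsq : (fun y => ∑ k, p k y ^ 2) ∈ E) : (fun y => ∑ k, (p k y - c k) ^ 2) ∈ E := by
  rw [sum_sq_sub_eq]
  exact E.add_mem (E.add_mem hsq (E.sum_mem fun k _ => E.smul_mem _ (hp k))) (E.smul_mem _ h1)

theorem tendsto_map_sum_sq_sub_apply (hT : ∀ n, IsMonotoneWeaklyNonlinear E (T n))
    (h1 : (fun _ : α => (1 : ℝ)) ∈ E) (hp : ∀ k, p k ∈ E)
    (hsq : (fun y => ∑ k, p k y ^ 2) ∈ E) {x : α}
    (h1x : Tendsto (fun n => T n (fun _ => 1) x) atTop (𝓝 1))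
    (hpx : ∀ k, Tendsto (fun n => T n (p k) x) atTop (𝓝 (c k)))
    (hnx : ∀ k, Tendsto (fun n => T n (-p k) x) atTop (𝓝 (-c k)))
    (hsqx : Tendsto (fun n => T n (fun y => ∑ k, p k y ^ 2) x) atTop (𝓝 (∑ k, c k ^ 2))) :
    Tendsto (fun n => T n (fun y => ∑ k, (p k y - c k) ^ 2) x) atTop (𝓝 0) := by
  have hL : ∑ k, (-2 * c k) • p k ∈ E := E.sum_mem fun k _ => E.smul_mem _ (hp k)
  have upper : ∀ n, T n (fun y => ∑ k, (p k y - c k) ^ 2) x ≤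
      T n (fun y => ∑ k, p k y ^ 2) x + ∑ k, T n ((-2 * c k) • p k) x +
        (∑ k, c k ^ 2) * T n (fun _ => 1) x := by
    intro n
    have hS := (hT n).add_le _ hsq _ hL x
    have hLS := (hT n).map_sum_le Finset.univ (fun k => E.smul_mem (-2 * c k) (hp k)) x
    rw [sum_sq_sub_eq, (hT n).map_add_const h1 (E.add_mem hsq hL)]
    simp only [Pi.add_apply, Pi.smul_apply, Finset.sum_apply, smul_eq_mul] at hS hLS ⊢
    linarith
  have hlim : ∑ k, c k ^ 2 + ∑ k, -2 * c k * c k + (∑ k, c k ^ 2) * 1 = 0 := by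
    simp only [mul_assoc, ← Finset.mul_sum, ← sq]
    ring
  have hupper := (hsqx.add (tendsto_finsetSum Finset.univ fun k _ =>
    tendsto_map_smul_apply hT (hp k) (hpx k) (hnx k) (-2 * c k))).add
      (h1x.const_mul (∑ k, c k ^ 2))
  rw [hlim] at hupper
  exact tendsto_of_tendsto_of_tendsto_of_le_of_le tendsto_const_nhds hupper
    (fun n => (hT n).nonneg_of_nonneg (sum_sq_sub_mem h1 hp hsq)
      (fun y => Finset.sum_nonneg fun k _ => sq_nonneg _) x) upper

theorem tendsto_map_apply_of_abs_sub_le (hT : ∀ n, IsMonotoneWeaklyNonlinear E (T n))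
    (h1 : (fun _ : α => (1 : ℝ)) ∈ E) {f φ : α → ℝ} (hf : f ∈ E) (hφ : φ ∈ E) {a : ℝ} {x : α}
    (h1x : Tendsto (fun n => T n (fun _ => 1) x) atTop (𝓝 1))
    (hφx : Tendsto (fun n => T n φ x) atTop (𝓝 0))
    (hfφ : ∀ ε > 0, ∃ K ≥ 0, ∀ y, |f y - a| ≤ ε + K * φ y) :
    Tendsto (fun n => T n f x) atTop (𝓝 a) := by
  suffices h : Tendsto (fun n => T n f x - a * T n (fun _ => 1) x) atTop (𝓝 0) by
    simpa using h.add (h1x.const_mul a)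
  rw [Metric.tendsto_nhds]
  intro ε hε
  obtain ⟨K, hK, hfK⟩ := hfφ (ε / 2) (by positivity)
  have hbound : Tendsto (fun n => ε / 2 * T n (fun _ => 1) x + K * T n φ x) atTop
      (𝓝 (ε / 2 * 1 + K * 0)) := (h1x.const_mul _).add (hφx.const_mul K)
  filter_upwards [hbound.eventually_lt_const (show ε / 2 * 1 + K * 0 < ε by linarith)] with n hn
  rw [Real.dist_eq, sub_zero]
  exact ((hT n).abs_map_sub_le h1 hf hφ hK hfK x).trans_lt hn

end Sequence

/-- Away from the `δ`-ball of continuity, `K = 2M/δ²` makes `K · dist² ≥ 2M ≥ |f y - f ω|`. -/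
theorem exists_abs_sub_le_add_mul_dist_sq {X : Type*} [PseudoMetricSpace X] {f : X → ℝ}
    {M : ℝ} (hM : ∀ y, |f y| ≤ M) {ω : X} (hf : ContinuousAt f ω) {ε : ℝ} (hε : 0 < ε) :
    ∃ K ≥ 0, ∀ y, |f y - f ω| ≤ ε + K * dist y ω ^ 2 := by
  obtain ⟨δ, hδ, hfδ⟩ := Metric.continuousAt_iff.1 hf ε hε
  have hM0 : 0 ≤ M := (abs_nonneg _).trans (hM ω)
  refine ⟨2 * M / δ ^ 2, by positivity, fun y => ?_⟩
  have hK : 0 ≤ 2 * M / δ ^ 2 * dist y ω ^ 2 := by positivity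
  rcases lt_or_ge (dist y ω) δ with hy | hy
  · have := hfδ hy
    rw [Real.dist_eq] at this
    linarith
  · have h2M : 2 * M ≤ 2 * M / δ ^ 2 * dist y ω ^ 2 := by
      rw [div_mul_eq_mul_div, le_div_iff₀ (by positivity)]
      gcongr
    linarith [abs_sub (f y) (f ω), hM y, hM ω]

theorem dist_sq_le_sum_sq {ι : Type*} [Fintype ι] (y z : ι → ℝ) :
    dist y z ^ 2 ≤ ∑ k, (y k - z k) ^ 2 := by
  have hdist : dist y z ≤ √(∑ k, (y k - z k) ^ 2) := by
    refine (dist_pi_le_iff (Real.sqrt_nonneg _)).2 fun k => ?_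
    rw [Real.dist_eq, ← Real.sqrt_sq_eq_abs]
    exact Real.sqrt_le_sqrt
      (Finset.single_le_sum (fun i _ => sq_nonneg (y i - z i)) (Finset.mem_univ k))
  calc dist y z ^ 2 ≤ √(∑ k, (y k - z k) ^ 2) ^ 2 := by gcongr
    _ = ∑ k, (y k - z k) ^ 2 := Real.sq_sqrt (Finset.sum_nonneg fun k _ => sq_nonneg _)

theorem korovkin_pointwise_at_omega_general {N : ℕ} (X : Set (Fin N → ℝ)) (ω : X)
    (E : Set (X → ℝ))
    -- `E` is a vector sublattice of `𝓕(X)`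
    (hEadd : ∀ f ∈ E, ∀ g ∈ E, f + g ∈ E)
    (hEsmul : ∀ (c : ℝ), ∀ f ∈ E, c • f ∈ E)
    -- `E` contains the test functions
    (hone : (fun _ : X => (1 : ℝ)) ∈ E)
    (hpr : ∀ k : Fin N, (fun x : X => (x : Fin N → ℝ) k) ∈ E)
    (hsq : (fun x : X => ∑ k, ((x : Fin N → ℝ) k) ^ 2) ∈ E)
    -- `(T n)` weakly nonlinear and monotone, from `E` into the functions on `X`
    (T : ℕ → (X → ℝ) → (X → ℝ))
    (hsubadd : ∀ n, ∀ f ∈ E, ∀ g ∈ E, T n (f + g) ≤ T n f + T n g)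
    (hhom : ∀ n, ∀ (α : ℝ), 0 ≤ α → ∀ f ∈ E, T n (α • f) = α • T n f)
    (hmono : ∀ n, ∀ f ∈ E, ∀ g ∈ E, f ≤ g → T n f ≤ T n g)
    (htrans : ∀ n, ∀ f ∈ E, ∀ (α : ℝ), 0 ≤ α →
      T n (f + α • (fun _ : X => (1 : ℝ))) = T n f + α • T n (fun _ : X => (1 : ℝ)))
    -- convergence to the value at `ω` on the test functions
    (htest1 : ∀ x : X, Tendsto (fun n => T n (fun _ => 1) x) atTop (𝓝 1))
    (htestpr : ∀ k : Fin N, ∀ x : X,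
      Tendsto (fun n => T n (fun y : X => (y : Fin N → ℝ) k) x) atTop
        (𝓝 ((ω : Fin N → ℝ) k)))
    (htestprneg : ∀ k : Fin N, ∀ x : X,
      Tendsto (fun n => T n (fun y : X => -((y : Fin N → ℝ) k)) x) atTop
        (𝓝 (-((ω : Fin N → ℝ) k))))
    (htestsq : ∀ x : X,
      Tendsto (fun n => T n (fun y : X => ∑ k, ((y : Fin N → ℝ) k) ^ 2) x) atTop
        (𝓝 (∑ k, ((ω : Fin N → ℝ) k) ^ 2)))
    -- conclusion for every bounded `f ∈ E` which is continuous at `ω`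
    (f : X → ℝ) (hfE : f ∈ E)
    (hfb : ∃ M : ℝ, ∀ x, |f x| ≤ M)
    (hfc : ContinuousAt f ω) :
    ∀ x : X, Tendsto (fun n => T n f x) atTop (𝓝 (f ω)) := by
  obtain ⟨V, rfl⟩ : ∃ V : Submodule ℝ (X → ℝ), (V : Set (X → ℝ)) = E :=
    ⟨{ carrier := E
       add_mem' := fun hf hg => hEadd _ hf _ hg
       zero_mem' := by simpa using hEsmul 0 _ hone
       smul_mem' := fun c f hf => hEsmul c f hf }, rfl⟩
  have hT : ∀ n, IsMonotoneWeaklyNonlinear V (T n) := fun n =>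
    ⟨hsubadd n, hhom n, hmono n, htrans n⟩
  obtain ⟨M, hM⟩ := hfb
  intro x
  refine tendsto_map_apply_of_abs_sub_le hT hone hfE (sum_sq_sub_mem hone hpr hsq) (htest1 x)
    (tendsto_map_sum_sq_sub_apply hT hone hpr hsq (htest1 x) (htestpr · x) (htestprneg · x)
      (htestsq x)) fun ε hε => ?_
  obtain ⟨K, hK, hfK⟩ := exists_abs_sub_le_add_mul_dist_sq hM hfc hε
  refine ⟨K, hK, fun y => (hfK y).trans ?_⟩
  gcongr
  exact dist_sq_le_sum_sq (y : Fin N → ℝ) ω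

/-- **Theorem `thmAltomare`.** Let `X ⊆ ℝ^N`, `ω ∈ X`, and `E` a vector
sublattice of functions on `X` containing the test functions
`1, ±pr_1, …, ±pr_N, Σ pr_k²`. If `(T n)` is a sequence of weakly nonlinear and
monotone operators from `E` into the real functions on `X` with `T n h x → h ω` for
every `x` and every test function `h`, then `T n f x → f ω` for every `x` and every
bounded `f ∈ E` continuous at `ω`. -/
theorem korovkin_pointwise_at_omega {N : ℕ} (X : Set (Fin N → ℝ)) (ω : X)
    (E : Set (X → ℝ))
    -- `E` is a vector sublattice of `𝓕(X)`
    (hEadd : ∀ f ∈ E, ∀ g ∈ E, f + g ∈ E)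
    (hEsmul : ∀ (c : ℝ), ∀ f ∈ E, c • f ∈ E)
    (hEsup : ∀ f ∈ E, ∀ g ∈ E, f ⊔ g ∈ E)
    -- `E` contains the test functions
    (hone : (fun _ : X => (1 : ℝ)) ∈ E)
    (hpr : ∀ k : Fin N, (fun x : X => (x : Fin N → ℝ) k) ∈ E)
    (hprneg : ∀ k : Fin N, (fun x : X => -((x : Fin N → ℝ) k)) ∈ E)
    (hsq : (fun x : X => ∑ k, ((x : Fin N → ℝ) k) ^ 2) ∈ E)
    -- `(T n)` weakly nonlinear and monotone, from `E` into the functions on `X`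
    (T : ℕ → (X → ℝ) → (X → ℝ))
    (hsubadd : ∀ n, ∀ f ∈ E, ∀ g ∈ E, T n (f + g) ≤ T n f + T n g)
    (hhom : ∀ n, ∀ (α : ℝ), 0 ≤ α → ∀ f ∈ E, T n (α • f) = α • T n f)
    (hmono : ∀ n, ∀ f ∈ E, ∀ g ∈ E, f ≤ g → T n f ≤ T n g)
    (htrans : ∀ n, ∀ f ∈ E, ∀ (α : ℝ), 0 ≤ α →
      T n (f + α • (fun _ : X => (1 : ℝ))) = T n f + α • T n (fun _ : X => (1 : ℝ)))
    -- convergence to the value at `ω` on the test functions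
    (htest1 : ∀ x : X, Tendsto (fun n => T n (fun _ => 1) x) atTop (𝓝 1))
    (htestpr : ∀ k : Fin N, ∀ x : X,
      Tendsto (fun n => T n (fun y : X => (y : Fin N → ℝ) k) x) atTop
        (𝓝 ((ω : Fin N → ℝ) k)))
    (htestprneg : ∀ k : Fin N, ∀ x : X,
      Tendsto (fun n => T n (fun y : X => -((y : Fin N → ℝ) k)) x) atTop
        (𝓝 (-((ω : Fin N → ℝ) k))))
    (htestsq : ∀ x : X,
      Tendsto (fun n => T n (fun y : X => ∑ k, ((y : Fin N → ℝ) k) ^ 2) x) atTop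
        (𝓝 (∑ k, ((ω : Fin N → ℝ) k) ^ 2)))
    -- conclusion for every bounded `f ∈ E` which is continuous at `ω`
    (f : X → ℝ) (hfE : f ∈ E)
    (hfb : ∃ M : ℝ, ∀ x, |f x| ≤ M)
    (hfc : ContinuousAt f ω) :
    ∀ x : X, Tendsto (fun n => T n f x) atTop (𝓝 (f ω)) :=
  korovkin_pointwise_at_omega_general X ω E hEadd hEsmul hone hpr hsq T hsubadd hhom hmono htrans
    htest1 htestpr htestprneg htestsq f hfE hfb hfc
end
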